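/- For every α > 0, λ > 0 and a > 0, ∑_{n=1}^∞ (α^n/n!) · ∫₀^a (λ^n/(n−1)!) x^{n−1} e^{−λx} dx = ∫₀^{2√(αλa)} I₁(w) e^{−w²/(4α)} dw. Equivalently, if N is Poisson with parameter α, independent of an i.i.d. sequence (E_k) of exponential variables with rate λ, then P(∑_{k=1}^{N} E_k ≤ a) = e^{−α} + e^{−α} ∫₀^{2√(αλa)} I₁(w) e^{−w²/(4α)} dw for a > 0. -/

import Mathlib

open MeasureTheory intervalIntegral

/-- The modified Bessel function of the first kind of order 1,
`I₁(w) = ∑ (w/2)^(2k+1)/(k!·(k+1)!)`. -/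
noncomputable def besselI1 (w : ℝ) : ℝ :=
  ∑' k : ℕ, (w / 2) ^ (2 * k + 1) /
    ((Nat.factorial k : ℝ) * (Nat.factorial (k + 1) : ℝ))

/-- For `α, λ, a > 0`,
`∑_{n=1}^∞ (α^n/n!)·∫₀^a (λ^n/(n−1)!) x^{n−1} e^{−λx} dx
  = ∫₀^{2√(αλa)} I₁(w) e^{−w²/(4α)} dw`:
the distribution function of a compound Poisson sum of exponentials, i.e. the BDDF
of the gamma variable `γ_{α,λ}`. -/
theorem stmt19 (α lam a : ℝ) (hα : 0 < α) (hlam : 0 < lam) (ha : 0 < a) :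
    ∑' n : ℕ, (α ^ (n + 1) / (Nat.factorial (n + 1) : ℝ)) *
        ∫ x in (0 : ℝ)..a, (lam ^ (n + 1) / (Nat.factorial n : ℝ)) * x ^ n * Real.exp (-lam * x)
      = ∫ w in (0 : ℝ)..(2 * Real.sqrt (α * lam * a)), besselI1 w * Real.exp (-w ^ 2 / (4 * α)) := by
  set b : ℝ := 2 * Real.sqrt (α * lam * a) with hbdef
  have hαla : 0 < α * lam * a := by positivity
  have hb : 0 < b := by
    have := Real.sqrt_pos.mpr hαla
    positivity
  have hbsq : b ^ 2 = 4 * (α * lam * a) := by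
    rw [hbdef, mul_pow, Real.sq_sqrt hαla.le]; ring
  clear_value b
  set h : ℕ → ℝ → ℝ := fun n w =>
    (w / 2) ^ (2 * n + 1) / ((Nat.factorial n : ℝ) * (Nat.factorial (n + 1) : ℝ)) *
      Real.exp (-w ^ 2 / (4 * α)) with hhdef
  clear_value h
  have hfn : ∀ n : ℕ, (0 : ℝ) < (Nat.factorial n : ℝ) := fun n => by
    exact_mod_cast Nat.factorial_pos n
  -- termwise change of variables
  have hterm : ∀ n : ℕ,
      (α ^ (n + 1) / (Nat.factorial (n + 1) : ℝ)) *
        ∫ x in (0 : ℝ)..a, (lam ^ (n + 1) / (Nat.factorial n : ℝ)) * x ^ n * Real.exp (-lam * x)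
      = ∫ w in (0 : ℝ)..b, h n w := by
    intro n
    have hcov : (∫ w in (0 : ℝ)..b, (w / (2 * α * lam)) •
          ((fun x => (lam ^ (n + 1) / (Nat.factorial n : ℝ)) * x ^ n * Real.exp (-lam * x)) ∘
            (fun w => w ^ 2 / (4 * α * lam))) w)
        = ∫ x in (0 : ℝ)..a,
            (lam ^ (n + 1) / (Nat.factorial n : ℝ)) * x ^ n * Real.exp (-lam * x) := by
      have key := integral_comp_smul_deriv (a := (0 : ℝ)) (b := b)
        (f := fun w => w ^ 2 / (4 * α * lam)) (f' := fun w => w / (2 * α * lam))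
        (g := fun x => (lam ^ (n + 1) / (Nat.factorial n : ℝ)) * x ^ n * Real.exp (-lam * x))
        (fun x _ => by
          have : HasDerivAt (fun w : ℝ => w ^ 2 / (4 * α * lam)) (2 * x / (4 * α * lam)) x := by
            simpa using (hasDerivAt_pow 2 x).div_const (4 * α * lam)
          convert this using 1
          field_simp
          ring)
        ((continuous_id.div_const _).continuousOn)
        (by continuity)
      rw [key]
      norm_num
      rw [hbsq]
      rw [show 4 * (α * lam * a) / (4 * α * lam) = a by field_simp]
    rw [← hcov, ← intervalIntegral.integral_const_mul]
    apply integral_congr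
    intro w _
    have hexp : -lam * (w ^ 2 / (4 * α * lam)) = -w ^ 2 / (4 * α) := by
      field_simp
    simp only [Function.comp, smul_eq_mul, hhdef, hexp]
    have h1 := (hfn n).ne'
    have h2 := (hfn (n + 1)).ne'
    have e1 : (w:ℝ) ^ (2 * n + 1) = (w ^ 2) ^ n * w := by rw [pow_succ, pow_mul]
    have e2 : (2:ℝ) ^ (2 * n + 1) = 4 ^ n * 2 := by
      rw [pow_succ, pow_mul]; norm_num
    have e3 : ((4:ℝ) * α * lam) ^ n = 4 ^ n * α ^ n * lam ^ n := by rw [mul_pow, mul_pow]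
    field_simp
    rw [div_pow, div_pow, e1, e2, mul_pow, mul_pow]
    field_simp
    ring
  rw [tsum_congr hterm]
  -- pass to set integrals
  have hIoc : ∀ n : ℕ, (∫ w in (0 : ℝ)..b, h n w) = ∫ w in Set.Ioc (0 : ℝ) b, h n w := by
    intro n; rw [intervalIntegral.integral_of_le hb.le]
  have hcont : ∀ n : ℕ, Continuous (h n) := by
    intro n
    rw [hhdef]
    apply Continuous.mul
    · exact ((continuous_id.div_const 2).pow _).div_const _
    · exact Real.continuous_exp.comp (by continuity)
  have hint : ∀ n : ℕ, IntegrableOn (h n) (Set.Ioc (0 : ℝ) b) := fun n =>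
    (hcont n).integrableOn_Ioc
  -- bound for summability
  have hboundpt : ∀ n : ℕ, ∀ w ∈ Set.Ioc (0 : ℝ) b,
      ‖h n w‖ ≤ (b / 2) ^ (2 * n + 1) / ((Nat.factorial n : ℝ) * (Nat.factorial (n + 1) : ℝ)) := by
    intro n w hw
    have hw0 : 0 < w := hw.1
    have hwb : w ≤ b := hw.2
    simp only [hhdef]
    rw [Real.norm_of_nonneg (by positivity)]
    have hexple : Real.exp (-w ^ 2 / (4 * α)) ≤ 1 := by
      rw [Real.exp_le_one_iff]
      have h1 : (0:ℝ) ≤ w ^ 2 / (4 * α) := by positivity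
      have h2 : -w ^ 2 / (4 * α) = -(w ^ 2 / (4 * α)) := by ring
      linarith
    have hpow : (w / 2) ^ (2 * n + 1) ≤ (b / 2) ^ (2 * n + 1) := by
      apply pow_le_pow_left₀ (by linarith) (by linarith) _
    calc (w / 2) ^ (2 * n + 1) / ((Nat.factorial n : ℝ) * (Nat.factorial (n + 1) : ℝ)) *
          Real.exp (-w ^ 2 / (4 * α))
        ≤ (b / 2) ^ (2 * n + 1) / ((Nat.factorial n : ℝ) * (Nat.factorial (n + 1) : ℝ)) * 1 := by
          gcongr
          all_goals first
          | positivity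
          | linarith
          | exact hexple
      _ = _ := mul_one _
  -- integral bounds
  have hboundint : ∀ n : ℕ, (∫ w in Set.Ioc (0 : ℝ) b, ‖h n w‖)
      ≤ b * (b / 2) * (((b / 2) ^ 2) ^ n / (Nat.factorial n : ℝ)) := by
    intro n
    have step1 : (∫ w in Set.Ioc (0 : ℝ) b, ‖h n w‖)
        ≤ ∫ _w in Set.Ioc (0 : ℝ) b,
            (b / 2) ^ (2 * n + 1) / ((Nat.factorial n : ℝ) * (Nat.factorial (n + 1) : ℝ)) := by
      apply setIntegral_mono_on (hint n).norm (integrableOn_const measure_Ioc_lt_top.ne)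
        measurableSet_Ioc (hboundpt n)
    have step2 : (∫ _w in Set.Ioc (0 : ℝ) b,
          (b / 2) ^ (2 * n + 1) / ((Nat.factorial n : ℝ) * (Nat.factorial (n + 1) : ℝ)))
        = b * ((b / 2) ^ (2 * n + 1) / ((Nat.factorial n : ℝ) * (Nat.factorial (n + 1) : ℝ))) := by
      rw [setIntegral_const]
      rw [Real.volume_real_Ioc_of_le hb.le]
      rw [smul_eq_mul, sub_zero]
    have step3 : b * ((b / 2) ^ (2 * n + 1) / ((Nat.factorial n : ℝ) * (Nat.factorial (n + 1) : ℝ)))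
        ≤ b * (b / 2) * (((b / 2) ^ 2) ^ n / (Nat.factorial n : ℝ)) := by
      have hp : (b / 2 : ℝ) ^ (2 * n + 1) = ((b / 2) ^ 2) ^ n * (b / 2) := by
        rw [pow_succ, pow_mul]
      rw [hp]
      rw [show b * (((b / 2) ^ 2) ^ n * (b / 2) / ((Nat.factorial n : ℝ) * (Nat.factorial (n + 1) : ℝ)))
          = b * (b / 2) * (((b / 2) ^ 2) ^ n / ((Nat.factorial n : ℝ) * (Nat.factorial (n + 1) : ℝ))) by ring]
      gcongr
      calc (Nat.factorial n : ℝ) = (Nat.factorial n : ℝ) * 1 := (mul_one _).symm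
        _ ≤ (Nat.factorial n : ℝ) * (Nat.factorial (n + 1) : ℝ) := by
            apply mul_le_mul_of_nonneg_left _ (hfn n).le
            exact_mod_cast Nat.one_le_iff_ne_zero.mpr (Nat.factorial_pos (n+1)).ne'
    exact step1.trans (step2 ▸ step3)
  have hsum : Summable fun n : ℕ => ∫ w in Set.Ioc (0 : ℝ) b, ‖h n w‖ := by
    apply Summable.of_nonneg_of_le
      (fun n => integral_nonneg fun w => norm_nonneg _) hboundint
    exact (Real.summable_pow_div_factorial ((b / 2) ^ 2)).mul_left (b * (b / 2))
  rw [tsum_congr hIoc, integral_tsum_of_summable_integral_norm hint hsum,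
    ← intervalIntegral.integral_of_le hb.le]
  apply integral_congr
  intro w _
  simp only [hhdef, besselI1]
  exact tsum_mul_right
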